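/- arXiv:2501.17276 — 11 statements merged into one kernel-verified Lean document; each statement's English description precedes it below -/
import Mathlib

section
/- Suppose in addition that (i) a1*a2*b1*b2*c1*c2 ≠ 0; (ii) for j = 1,2, aj is not equal to any of b1, -b1, b2, -b2, c1, -c1, c2, -c2, and bj is not equal to any of c1, -c1, c2, -c2; (iii) none of a1^2, b1^2, c1^2 equals 1/2; (iv) at most one of the three elements w*y-3*x*z, x*y+w*z, w^2+3*x^2-y^2-3*z^2 is zero. Then every 7x7 matrix A over K satisfying A*PhiS = PhiS*A and A*PhiR = PhiR*A is a scalar multiple of the 7x7 identity matrix; in particular the corresponding representation of the modular group is indecomposable. -/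
/-!
`PhiR` is the identity on the first three coordinates and acts on the last four by an element of
order 3 without nonzero fixed vectors, so `PhiR ^ 2 + PhiR + 1` is three times the projection `P`
onto the first three coordinates, and every `A` commuting with `PhiR` commutes with `P`.
Compressing `PhiS` by `P` and `1 - P` leaves its diagonal, whose entries are pairwise distinct
within each block by (i) and (ii); so `A` commutes with two diagonal matrices that together
separate all coordinates, hence is diagonal. The nonzero entries `PhiS k (k + 4)` and, by (iv),
enough nonzero off-diagonal entries of `PhiR` then force all diagonal entries of `A` to agree.
-/

open Matrix

/-- The image of the order-2 generator `S` of the modular group under the paper's family of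
representations into `G₂`. -/
def PhiS {K : Type*} [Field K] (a1 a2 b1 b2 c1 c2 : K) : Matrix (Fin 7) (Fin 7) K :=
  !![a1^2 - a2^2, 0, 0, 0, 2*a1*a2, 0, 0;
     0, b1^2 - b2^2, 0, 0, 0, 2*b1*b2, 0;
     0, 0, c1^2 - c2^2, 0, 0, 0, 2*c1*c2;
     0, 0, 0, -1, 0, 0, 0;
     2*a1*a2, 0, 0, 0, a2^2 - a1^2, 0, 0;
     0, 2*b1*b2, 0, 0, 0, b2^2 - b1^2, 0;
     0, 0, 2*c1*c2, 0, 0, 0, c2^2 - c1^2]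

/-- The image of the order-3 generator `R` of the modular group under the paper's family of
representations into `G₂`. -/
def PhiR {K : Type*} [Field K] (w x y z : K) : Matrix (Fin 7) (Fin 7) K :=
  !![1, 0, 0, 0, 0, 0, 0;
     0, 1, 0, 0, 0, 0, 0;
     0, 0, 1, 0, 0, 0, 0;
     0, 0, 0, -(1/2), -(3/2)*(w^2 + 3*x^2 - y^2 - 3*z^2), -3*(x*y + w*z), 3*(w*y - 3*x*z);
     0, 0, 0, (1/2)*(w^2 + 3*x^2 - y^2 - 3*z^2), -(1/2), w*y - 3*x*z, 3*(x*y + w*z);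
     0, 0, 0, 3*(x*y + w*z), -3*(w*y - 3*x*z), -(1/2), -(3/2)*(w^2 + 3*x^2 - y^2 - 3*z^2);
     0, 0, 0, -(w*y - 3*x*z), -3*(x*y + w*z), (1/2)*(w^2 + 3*x^2 - y^2 - 3*z^2), -(1/2)]


namespace Matrix

variable {n R : Type*} [CommRing R] [NoZeroDivisors R] [Fintype n] [DecidableEq n]

theorem apply_eq_zero_or_eq_of_commute_diagonal {d : n → R} {A : Matrix n n R}
    (h : Commute (diagonal d) A) (i j : n) : A i j = 0 ∨ d i = d j := by
  have hij : (d i - d j) * A i j = 0 := by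
    have := congr_fun₂ h.eq i j
    rw [diagonal_mul, mul_diagonal] at this
    linear_combination this
  rcases mul_eq_zero.mp hij with h | h
  · exact Or.inr (sub_eq_zero.mp h)
  · exact Or.inl h

theorem isDiag_of_commute_diagonal {d e : n → R} {A : Matrix n n R}
    (hd : Commute (diagonal d) A) (he : Commute (diagonal e) A)
    (hde : ∀ i j, d i = d j → e i = e j → i = j) : A.IsDiag := fun i j hij =>
  (apply_eq_zero_or_eq_of_commute_diagonal hd i j).elim id fun h =>
    (apply_eq_zero_or_eq_of_commute_diagonal he i j).elim id fun h' => (hij (hde i j h h')).elim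

end Matrix

section

variable {K : Type*} [Field K]

variable (K) in
def firstThreeProj : Matrix (Fin 7) (Fin 7) K := diagonal ![1, 1, 1, 0, 0, 0, 0]

theorem PhiR_sq_add_PhiR_add_one {w x y z : K} (h2 : (2 : K) ≠ 0)
    (hC2 : w^2 + 3*x^2 + y^2 + 3*z^2 = 1) :
    PhiR w x y z ^ 2 + PhiR w x y z + 1 = (3 : K) • firstThreeProj K := by
  ext i j
  simp only [sq, Matrix.add_apply, mul_apply, Fin.sum_univ_seven, Matrix.smul_apply, one_apply,
    firstThreeProj, diagonal_apply]
  fin_cases i <;> fin_cases j <;>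
    simp only [PhiR, of_apply, cons_val', cons_val, cons_val_zero, cons_val_one, cons_val_fin_one,
      Fin.reduceFinMk, Fin.zero_eta, Fin.mk_one, Fin.isValue, Fin.reduceEq, ↓reduceIte] <;>
    field_simp <;>
    first | ring1 | linear_combination (-3 * (w^2 + 3*x^2 + y^2 + 3*z^2 + 1)) * hC2

theorem firstThreeProj_compress_PhiS (a1 a2 b1 b2 c1 c2 : K) :
    firstThreeProj K * PhiS a1 a2 b1 b2 c1 c2 * firstThreeProj K +
      (1 - firstThreeProj K) * PhiS a1 a2 b1 b2 c1 c2 * (1 - firstThreeProj K) =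
      diagonal (PhiS a1 a2 b1 b2 c1 c2).diag := by
  rw [firstThreeProj, ← diagonal_one, diagonal_sub]
  ext i j
  simp only [Matrix.add_apply, diagonal_mul, mul_diagonal, diagonal_apply, diag]
  fin_cases i <;> fin_cases j <;> simp [PhiS]

theorem sq_sub_sq_ne_sq_sub_sq {a1 a2 b1 b2 : K} (h2 : (2 : K) ≠ 0)
    (ha : a1^2 + a2^2 = 1) (hb : b1^2 + b2^2 = 1) (h : a1 ≠ b1) (h' : a1 ≠ -b1) :
    a1^2 - a2^2 ≠ b1^2 - b2^2 := by
  intro heq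
  have : 2 * ((a1 - b1) * (a1 + b1)) = 0 := by linear_combination heq + ha - hb
  rcases mul_eq_zero.mp this with h0 | h0
  · exact h2 h0
  rcases mul_eq_zero.mp h0 with h0 | h0
  · exact h (sub_eq_zero.mp h0)
  · exact h' (eq_neg_of_add_eq_zero_left h0)

theorem sq_sub_sq_ne_one {a1 a2 : K} (h2 : (2 : K) ≠ 0) (ha : a1^2 + a2^2 = 1) (ha2 : a2 ≠ 0) :
    a1^2 - a2^2 ≠ 1 := by
  intro heq
  exact mul_ne_zero h2 (pow_ne_zero 2 ha2) (by linear_combination ha - heq)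

section Commutant

variable {a1 a2 b1 b2 c1 c2 w x y z : K} {A : Matrix (Fin 7) (Fin 7) K}

theorem commute_firstThreeProj_of_commute_PhiR (h2 : (2 : K) ≠ 0) (h3 : (3 : K) ≠ 0)
    (hC2 : w^2 + 3*x^2 + y^2 + 3*z^2 = 1) (hR : Commute A (PhiR w x y z)) :
    Commute A (firstThreeProj K) := by
  have h : Commute A ((3 : K) • firstThreeProj K) := by
    rw [← PhiR_sq_add_PhiR_add_one h2 hC2]
    exact ((hR.pow_right 2).add_right hR).add_right (Commute.one_right A)
  simpa [inv_smul_smul₀ h3] using h.smul_right (3 : K)⁻¹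

theorem commute_diagonal_diag_PhiS_of_commute (hS : Commute A (PhiS a1 a2 b1 b2 c1 c2))
    (hP : Commute A (firstThreeProj K)) : Commute A (diagonal (PhiS a1 a2 b1 b2 c1 c2).diag) := by
  rw [← firstThreeProj_compress_PhiS]
  have hP' := (Commute.one_right A).sub_right hP
  exact ((hP.mul_right hS).mul_right hP).add_right ((hP'.mul_right hS).mul_right hP')

theorem isDiag_of_commute_PhiS_of_commute_firstThreeProj
    (hab : a1^2 - a2^2 ≠ b1^2 - b2^2) (hac : a1^2 - a2^2 ≠ c1^2 - c2^2)
    (hbc : b1^2 - b2^2 ≠ c1^2 - c2^2) (ha : a1^2 - a2^2 ≠ 1) (hb : b1^2 - b2^2 ≠ 1)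
    (hc : c1^2 - c2^2 ≠ 1) (hS : Commute A (PhiS a1 a2 b1 b2 c1 c2))
    (hP : Commute A (firstThreeProj K)) : A.IsDiag := by
  refine isDiag_of_commute_diagonal (d := ![1, 1, 1, 0, 0, 0, 0]) hP.symm
    (commute_diagonal_diag_PhiS_of_commute hS hP).symm fun i j => ?_
  fin_cases i <;> fin_cases j <;>
    simp only [PhiS, diag_apply, of_apply, cons_val', cons_val, cons_val_zero, cons_val_one,
      cons_val_fin_one, Fin.reduceFinMk, Fin.zero_eta, Fin.mk_one, Fin.isValue, Fin.reduceEq] <;>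
    grind

theorem eq_of_diagonal_commute_PhiS {δ : Fin 7 → K} (ha : 2*a1*a2 ≠ 0) (hb : 2*b1*b2 ≠ 0)
    (hc : 2*c1*c2 ≠ 0) (hS : Commute (diagonal δ) (PhiS a1 a2 b1 b2 c1 c2)) :
    δ 0 = δ 4 ∧ δ 1 = δ 5 ∧ δ 2 = δ 6 := by
  have key i j := (apply_eq_zero_or_eq_of_commute_diagonal hS i j).resolve_left
  exact ⟨key 0 4 (by simpa [PhiS] using ha), key 1 5 (by simpa [PhiS] using hb),
    key 2 6 (by simpa [PhiS] using hc)⟩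

theorem eq_of_diagonal_commute_PhiR {δ : Fin 7 → K} (h2 : (2 : K) ≠ 0) (h3 : (3 : K) ≠ 0)
    (hqp : ¬(w*y - 3*x*z = 0 ∧ x*y + w*z = 0))
    (hqs : ¬(w*y - 3*x*z = 0 ∧ w^2 + 3*x^2 - y^2 - 3*z^2 = 0))
    (hps : ¬(x*y + w*z = 0 ∧ w^2 + 3*x^2 - y^2 - 3*z^2 = 0))
    (hR : Commute (diagonal δ) (PhiR w x y z)) :
    δ 3 = δ 4 ∧ δ 3 = δ 5 ∧ δ 3 = δ 6 := by
  have key i j := (apply_eq_zero_or_eq_of_commute_diagonal hR i j).resolve_left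
  have hs : w^2 + 3*x^2 - y^2 - 3*z^2 ≠ 0 → δ 3 = δ 4 ∧ δ 5 = δ 6 := fun hs =>
    ⟨key 3 4 (by simp [PhiR, hs, h2, h3]), key 5 6 (by simp [PhiR, hs, h2, h3])⟩
  have hp : x*y + w*z ≠ 0 → δ 3 = δ 5 ∧ δ 4 = δ 6 := fun hp =>
    ⟨key 3 5 (by simp [PhiR, hp, h3]), key 4 6 (by simp [PhiR, hp, h3])⟩
  have hq : w*y - 3*x*z ≠ 0 → δ 3 = δ 6 ∧ δ 4 = δ 5 := fun hq =>
    ⟨key 3 6 (by simp [PhiR, hq, h3]), key 4 5 (by simp [PhiR, hq])⟩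
  -- any two of the three perfect matchings {34, 56}, {35, 46}, {36, 45} connect {3, 4, 5, 6}
  grind

end Commutant

end

theorem stmt0_general {K : Type*} [Field K] (hchar2 : (2 : K) ≠ 0) (hchar3 : (3 : K) ≠ 0)
    (a1 a2 b1 b2 c1 c2 w x y z : K)
    (hC1a : a1^2 + a2^2 = 1) (hC1b : b1^2 + b2^2 = 1) (hC1c : c1^2 + c2^2 = 1)
    (hC2 : w^2 + 3*x^2 + y^2 + 3*z^2 = 1)
    (hi : a1*a2*b1*b2*c1*c2 ≠ 0)
    (hii1 : a1 ∉ ({b1, -b1, b2, -b2, c1, -c1, c2, -c2} : Set K))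
    (hii3 : b1 ∉ ({c1, -c1, c2, -c2} : Set K))
    (hiv1 : ¬(w*y - 3*x*z = 0 ∧ x*y + w*z = 0))
    (hiv2 : ¬(w*y - 3*x*z = 0 ∧ w^2 + 3*x^2 - y^2 - 3*z^2 = 0))
    (hiv3 : ¬(x*y + w*z = 0 ∧ w^2 + 3*x^2 - y^2 - 3*z^2 = 0)) :
    ∀ A : Matrix (Fin 7) (Fin 7) K,
      A * PhiS a1 a2 b1 b2 c1 c2 = PhiS a1 a2 b1 b2 c1 c2 * A →
      A * PhiR w x y z = PhiR w x y z * A →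
      ∃ k : K, A = k • (1 : Matrix (Fin 7) (Fin 7) K) := by
  intro A hS hR
  simp only [mul_ne_zero_iff] at hi
  obtain ⟨⟨⟨⟨⟨ha1, ha2⟩, hb1⟩, hb2⟩, hc1⟩, hc2⟩ := hi
  simp only [Set.mem_insert_iff, Set.mem_singleton_iff, not_or] at hii1 hii3
  obtain ⟨hab, hab', -, -, hac, hac', -, -⟩ := hii1
  obtain ⟨hbc, hbc', -, -⟩ := hii3
  have hdiag : A.IsDiag := isDiag_of_commute_PhiS_of_commute_firstThreeProj
    (sq_sub_sq_ne_sq_sub_sq hchar2 hC1a hC1b hab hab')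
    (sq_sub_sq_ne_sq_sub_sq hchar2 hC1a hC1c hac hac')
    (sq_sub_sq_ne_sq_sub_sq hchar2 hC1b hC1c hbc hbc')
    (sq_sub_sq_ne_one hchar2 hC1a ha2) (sq_sub_sq_ne_one hchar2 hC1b hb2)
    (sq_sub_sq_ne_one hchar2 hC1c hc2) hS
    (commute_firstThreeProj_of_commute_PhiR hchar2 hchar3 hC2 hR)
  obtain ⟨δ, rfl⟩ : ∃ δ, A = diagonal δ := ⟨_, hdiag.diagonal_diag.symm⟩
  obtain ⟨h04, h15, h26⟩ := eq_of_diagonal_commute_PhiS (by simp [hchar2, ha1, ha2])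
    (by simp [hchar2, hb1, hb2]) (by simp [hchar2, hc1, hc2]) hS
  obtain ⟨h34, h35, h36⟩ := eq_of_diagonal_commute_PhiR hchar2 hchar3 hiv1 hiv2 hiv3 hR
  refine ⟨δ 0, ?_⟩
  rw [smul_one_eq_diagonal]
  congr 1
  funext i
  fin_cases i <;> grind

/-- Under conditions (i)-(iv), every matrix commuting with both `PhiS` and `PhiR` is scalar;
in particular the representation is indecomposable. -/
theorem stmt0 {K : Type*} [Field K] (hchar2 : (2 : K) ≠ 0) (hchar3 : (3 : K) ≠ 0)
    (a1 a2 b1 b2 c1 c2 w x y z : K)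
    (hC1a : a1^2 + a2^2 = 1) (hC1b : b1^2 + b2^2 = 1) (hC1c : c1^2 + c2^2 = 1)
    (hC2 : w^2 + 3*x^2 + y^2 + 3*z^2 = 1)
    (hC3 : !![a1, -a2; a2, a1] * !![b1, -b2; b2, b1] * !![c1, -c2; c2, c1] = 1)
    (hi : a1*a2*b1*b2*c1*c2 ≠ 0)
    (hii1 : a1 ∉ ({b1, -b1, b2, -b2, c1, -c1, c2, -c2} : Set K))
    (hii2 : a2 ∉ ({b1, -b1, b2, -b2, c1, -c1, c2, -c2} : Set K))
    (hii3 : b1 ∉ ({c1, -c1, c2, -c2} : Set K))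
    (hii4 : b2 ∉ ({c1, -c1, c2, -c2} : Set K))
    (hiii1 : a1^2 ≠ 1/2) (hiii2 : b1^2 ≠ 1/2) (hiii3 : c1^2 ≠ 1/2)
    (hiv1 : ¬(w*y - 3*x*z = 0 ∧ x*y + w*z = 0))
    (hiv2 : ¬(w*y - 3*x*z = 0 ∧ w^2 + 3*x^2 - y^2 - 3*z^2 = 0))
    (hiv3 : ¬(x*y + w*z = 0 ∧ w^2 + 3*x^2 - y^2 - 3*z^2 = 0)) :
    ∀ A : Matrix (Fin 7) (Fin 7) K,
      A * PhiS a1 a2 b1 b2 c1 c2 = PhiS a1 a2 b1 b2 c1 c2 * A →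
      A * PhiR w x y z = PhiR w x y z * A →
      ∃ k : K, A = k • (1 : Matrix (Fin 7) (Fin 7) K) :=
  stmt0_general hchar2 hchar3 a1 a2 b1 b2 c1 c2 w x y z hC1a hC1b hC1c hC2 hi hii1 hii3 hiv1 hiv2
    hiv3
end

section
/- The trace of the matrix product PhiS * PhiR equals 5 - 3*(a2^2 + b2^2 + c2^2). In particular, the trace of the image of T = S^{-1}R (the translation matrix of the modular group) under the representation does not depend on the parameters w, x, y, z. -/
open Matrix

theorem Matrix.trace_mul_eq_sum_diag_mul_diag {n R : Type*} [Fintype n] [NonUnitalNonAssocSemiring R]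
    (A B : Matrix n n R) (h : ∀ i j, i ≠ j → A i j * B j i = 0) :
    trace (A * B) = ∑ i, A i i * B i i := by
  refine Finset.sum_congr rfl fun i _ => ?_
  exact Finset.sum_eq_single i (fun j _ hji => h i j hji.symm) (by simp)

section

variable {K : Type*} [Field K]

/-- `PhiR` is block diagonal for `Fin 7 = 3 + 4`, while every off-diagonal entry of `PhiS`
joins the two blocks. -/
theorem PhiS_mul_PhiR_offDiag (a1 a2 b1 b2 c1 c2 w x y z : K) (i j : Fin 7) (hij : i ≠ j) :
    PhiS a1 a2 b1 b2 c1 c2 i j * PhiR w x y z j i = 0 := by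
  fin_cases i <;> fin_cases j <;> first | exact absurd rfl hij | simp [PhiS, PhiR]

theorem trace_PhiS_mul_PhiR (h2 : (2 : K) ≠ 0) (a1 a2 b1 b2 c1 c2 w x y z : K) :
    trace (PhiS a1 a2 b1 b2 c1 c2 * PhiR w x y z) =
      1 / 2 + 3 / 2 * ((a1^2 - a2^2) + (b1^2 - b2^2) + (c1^2 - c2^2)) := by
  rw [trace_mul_eq_sum_diag_mul_diag _ _ (PhiS_mul_PhiR_offDiag a1 a2 b1 b2 c1 c2 w x y z),
    Fin.sum_univ_seven]
  simp only [PhiS, PhiR, Fin.isValue, of_apply, cons_val', cons_val_zero, cons_val_fin_one,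
    cons_val_one, cons_val, one_div, neg_mul, neg_sub, mul_one, mul_neg, one_mul, neg_neg]
  field_simp
  ring

end

theorem stmt3_general {K : Type*} [Field K] (hchar2 : (2 : K) ≠ 0)
    (a1 a2 b1 b2 c1 c2 w x y z : K)
    (hC1a : a1^2 + a2^2 = 1) (hC1b : b1^2 + b2^2 = 1) (hC1c : c1^2 + c2^2 = 1) :
    Matrix.trace (PhiS a1 a2 b1 b2 c1 c2 * PhiR w x y z) = 5 - 3*(a2^2 + b2^2 + c2^2) := by
  rw [trace_PhiS_mul_PhiR hchar2]
  field_simp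
  linear_combination 3 * (hC1a + hC1b + hC1c)

/-- The trace of `PhiS * PhiR` (the image of the translation `T = S⁻¹R`) equals
`5 - 3*(a2² + b2² + c2²)`; in particular it is independent of `w, x, y, z`. -/
theorem stmt3 {K : Type*} [Field K] (hchar2 : (2 : K) ≠ 0) (hchar3 : (3 : K) ≠ 0)
    (a1 a2 b1 b2 c1 c2 w x y z : K)
    (hC1a : a1^2 + a2^2 = 1) (hC1b : b1^2 + b2^2 = 1) (hC1c : c1^2 + c2^2 = 1)
    (hC2 : w^2 + 3*x^2 + y^2 + 3*z^2 = 1) :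
    Matrix.trace (PhiS a1 a2 b1 b2 c1 c2 * PhiR w x y z) = 5 - 3*(a2^2 + b2^2 + c2^2) :=
  stmt3_general hchar2 a1 a2 b1 b2 c1 c2 w x y z hC1a hC1b hC1c
end

section
/- Suppose in addition that a1*a2*b1*b2*c1*c2 ≠ 0. Then the only vector v in K^7 satisfying both PhiS * v = v and PhiR * v = v is v = 0, i.e. PhiS and PhiR have no common nonzero fixed vector. (This is the necessity direction of the paper's criterion that the representation factors through an A2-subgroup SU_M of G2 exactly when a1*a2*b1*b2*c1*c2 = 0.) -/
open Matrix

private lemma my_cons_val_five {α : Type*} {m : ℕ} (x : α)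
    (u : Fin m.succ.succ.succ.succ.succ → α) :
    Matrix.vecCons x u 5 = Matrix.vecHead (Matrix.vecTail (Matrix.vecTail
      (Matrix.vecTail (Matrix.vecTail u)))) := rfl

private lemma my_cons_val_six {α : Type*} {m : ℕ} (x : α)
    (u : Fin m.succ.succ.succ.succ.succ.succ → α) :
    Matrix.vecCons x u 6 = Matrix.vecHead (Matrix.vecTail (Matrix.vecTail
      (Matrix.vecTail (Matrix.vecTail (Matrix.vecTail u))))) := rfl

/-- If `a1*a2*b1*b2*c1*c2 ≠ 0` then `PhiS` and `PhiR` have no common nonzero fixed vector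
(necessity direction of the criterion for factoring through an `A₂`-subgroup `SU_M`). -/
theorem stmt6 {K : Type*} [Field K] (hchar2 : (2 : K) ≠ 0) (hchar3 : (3 : K) ≠ 0)
    (a1 a2 b1 b2 c1 c2 w x y z : K)
    (hC1a : a1^2 + a2^2 = 1) (hC1b : b1^2 + b2^2 = 1) (hC1c : c1^2 + c2^2 = 1)
    (hC2 : w^2 + 3*x^2 + y^2 + 3*z^2 = 1)
    (hC3 : !![a1, -a2; a2, a1] * !![b1, -b2; b2, b1] * !![c1, -c2; c2, c1] = 1)
    (hne : a1*a2*b1*b2*c1*c2 ≠ 0) :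
    ∀ v : Fin 7 → K, (PhiS a1 a2 b1 b2 c1 c2).mulVec v = v →
      (PhiR w x y z).mulVec v = v → v = 0 := by
  intro v hS hR
  have h3 := congrFun hR 3
  have h4 := congrFun hR 4
  have h5 := congrFun hR 5
  have h6 := congrFun hR 6
  simp only [PhiR, Matrix.mulVec, dotProduct, Fin.sum_univ_seven,
    Matrix.cons_val_zero, Matrix.cons_val_one, Matrix.head_cons,
    Matrix.cons_val_two, Matrix.tail_cons, Matrix.cons_val_three, Matrix.cons_val_four,
    my_cons_val_five, my_cons_val_six,
    Matrix.of_apply] at h3 h4 h5 h6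
  field_simp [hchar2] at h3 h4 h5 h6
  have ha2 : a2 ≠ 0 := fun h => hne (by rw [h]; ring)
  have hb2 : b2 ≠ 0 := fun h => hne (by rw [h]; ring)
  have hc2 : c2 ≠ 0 := fun h => hne (by rw [h]; ring)
  have h24 : (24 : K) ≠ 0 := by
    have h : (24 : K) = 2*2*2*3 := by norm_num
    rw [h]
    exact mul_ne_zero (mul_ne_zero (mul_ne_zero hchar2 hchar2) hchar2) hchar3
  have hv3 : v 3 = 0 := by
    have h24v : (24:K) * v 3 = 0 := by
      linear_combination (-6 : K) * h3 + (6*(w^2+3*x^2-y^2-3*z^2)) * h4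
      + (12*(x*y+w*z)) * h5 + (-12*(w*y-3*x*z)) * h6
      - 6*(w^2+3*x^2+y^2+3*z^2+1) * v 3 * hC2
    exact (mul_eq_zero.mp h24v).resolve_left h24
  have hv4 : v 4 = 0 := by
    have h24v : (24:K) * v 4 = 0 := by
      linear_combination (-2*(w^2+3*x^2-y^2-3*z^2)) * h3 + (-6 : K) * h4
      + (-4*(w*y-3*x*z)) * h5 + (-12*(x*y+w*z)) * h6
      - 6*(w^2+3*x^2+y^2+3*z^2+1) * v 4 * hC2
    exact (mul_eq_zero.mp h24v).resolve_left h24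
  have hv5 : v 5 = 0 := by
    have h24v : (24:K) * v 5 = 0 := by
      linear_combination (-12*(x*y+w*z)) * h3 + (12*(w*y-3*x*z)) * h4
      + (-6 : K) * h5 + (6*(w^2+3*x^2-y^2-3*z^2)) * h6
      - 6*(w^2+3*x^2+y^2+3*z^2+1) * v 5 * hC2
    exact (mul_eq_zero.mp h24v).resolve_left h24
  have hv6 : v 6 = 0 := by
    have h24v : (24:K) * v 6 = 0 := by
      linear_combination (4*(w*y-3*x*z)) * h3 + (12*(x*y+w*z)) * h4
      + (-2*(w^2+3*x^2-y^2-3*z^2)) * h5 + (-6 : K) * h6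
      - 6*(w^2+3*x^2+y^2+3*z^2+1) * v 6 * hC2
    exact (mul_eq_zero.mp h24v).resolve_left h24
  have h0 := congrFun hS 0
  have h1 := congrFun hS 1
  have h2 := congrFun hS 2
  simp only [PhiS, Matrix.mulVec, dotProduct, Fin.sum_univ_seven,
    Matrix.cons_val_zero, Matrix.cons_val_one, Matrix.head_cons,
    Matrix.cons_val_two, Matrix.tail_cons, Matrix.cons_val_three, Matrix.cons_val_four,
    my_cons_val_five, my_cons_val_six,
    Matrix.of_apply] at h0 h1 h2
  have hv0 : v 0 = 0 := by
    have h : (2 * a2^2) * v 0 = 0 := by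
      linear_combination -h0 + 2*a1*a2 * hv4 + v 0 * hC1a
    rcases mul_eq_zero.mp h with h' | h'
    · exact absurd h' (by
        rcases mul_eq_zero.mp · with h2' | h2'
        exacts [hchar2 h2', ha2 (pow_eq_zero_iff two_ne_zero |>.mp h2')])
    · exact h'
  have hv1 : v 1 = 0 := by
    have h : (2 * b2^2) * v 1 = 0 := by
      linear_combination -h1 + 2*b1*b2 * hv5 + v 1 * hC1b
    rcases mul_eq_zero.mp h with h' | h'
    · exact absurd h' (by
        rcases mul_eq_zero.mp · with h2' | h2'
        exacts [hchar2 h2', hb2 (pow_eq_zero_iff two_ne_zero |>.mp h2')])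
    · exact h'
  have hv2 : v 2 = 0 := by
    have h : (2 * c2^2) * v 2 = 0 := by
      linear_combination -h2 + 2*c1*c2 * hv6 + v 2 * hC1c
    rcases mul_eq_zero.mp h with h' | h'
    · exact absurd h' (by
        rcases mul_eq_zero.mp · with h2' | h2'
        exacts [hchar2 h2', hc2 (pow_eq_zero_iff two_ne_zero |>.mp h2')])
    · exact h'
  funext i
  fin_cases i <;> simp [hv0, hv1, hv2, hv3, hv4, hv5, hv6]
end

section
/- There exist g1, g2, g3 in K such that (X-1)*(X-L)*(X-L^2)*(X-L^3)*(X-L^{-1})*(X-L^{-2})*(X-L^{-3}) = X^7 + g1*X^6 + g2*X^5 + g3*X^4 - g3*X^3 - g2*X^2 - g1*X - 1 as polynomials in K[X], and these g1, g2, g3 satisfy the three relations: (1) g1^2 - g1 - g2 + g3 = 0; (2) g1^2*g2 - g1*g2^2 - g2^3 + 2*g1^2*g3 - g1*g3^2 = 0; (3) g2^4 - g1*g2^2*g3 - g2^3*g3 + g1*g2*g3^2 - g1*g3^3 - g2^3 + g2^2*g3 + 2*g2*g3^2 - g3^3 = 0. -/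
/-!
Pairing each root `L^k` with `L^{-k}` writes the polynomial as
`(X - 1) (X² - s₁X + 1) (X² - s₂X + 1) (X² - s₃X + 1)` with `s_k = L^k + L^{-k}`, which is
palindromic up to sign with coefficients given by Vieta's formulas in the `s_k`. Since
`s₂ = t² - 2` and `s₃ = t³ - 3t` for `t = L + L⁻¹`, the coefficients `g₁, g₂, g₃` are polynomials
in the single parameter `t`, and the three relations are polynomial identities in `t`.
-/

open Polynomial

namespace G2CharPoly

variable {R : Type*} [CommRing R]

def coeff₁ (a b c : R) : R := -(1 + a + b + c)

def coeff₂ (a b c : R) : R := 3 + (a + b + c) + (a * b + b * c + c * a)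

def coeff₃ (a b c : R) : R := -(3 + 2 * (a + b + c) + (a * b + b * c + c * a) + a * b * c)

theorem X_sub_one_mul_quadratics (a b c : R) :
    (X - 1) * (X ^ 2 - C a * X + 1) * (X ^ 2 - C b * X + 1) * (X ^ 2 - C c * X + 1) =
      X ^ 7 + C (coeff₁ a b c) * X ^ 6 + C (coeff₂ a b c) * X ^ 5 + C (coeff₃ a b c) * X ^ 4
        - C (coeff₃ a b c) * X ^ 3 - C (coeff₂ a b c) * X ^ 2 - C (coeff₁ a b c) * X - 1 := by
  simp only [coeff₁, coeff₂, coeff₃, map_neg, map_add, map_mul, map_ofNat, map_one]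
  ring

def g₁ (t : R) : R := coeff₁ t (t ^ 2 - 2) (t ^ 3 - 3 * t)

def g₂ (t : R) : R := coeff₂ t (t ^ 2 - 2) (t ^ 3 - 3 * t)

def g₃ (t : R) : R := coeff₃ t (t ^ 2 - 2) (t ^ 3 - 3 * t)

theorem g_relation₁ (t : R) : g₁ t ^ 2 - g₁ t - g₂ t + g₃ t = 0 := by
  simp only [g₁, g₂, g₃, coeff₁, coeff₂, coeff₃]
  ring

theorem g_relation₂ (t : R) :
    g₁ t ^ 2 * g₂ t - g₁ t * g₂ t ^ 2 - g₂ t ^ 3 + 2 * g₁ t ^ 2 * g₃ t - g₁ t * g₃ t ^ 2 = 0 := by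
  simp only [g₁, g₂, g₃, coeff₁, coeff₂, coeff₃]
  ring

theorem g_relation₃ (t : R) :
    g₂ t ^ 4 - g₁ t * g₂ t ^ 2 * g₃ t - g₂ t ^ 3 * g₃ t + g₁ t * g₂ t * g₃ t ^ 2
      - g₁ t * g₃ t ^ 3 - g₂ t ^ 3 + g₂ t ^ 2 * g₃ t + 2 * g₂ t * g₃ t ^ 2 - g₃ t ^ 3 = 0 := by
  simp only [g₁, g₂, g₃, coeff₁, coeff₂, coeff₃]
  ring

section Field

variable {K : Type*} [Field K]

theorem X_sub_C_mul_X_sub_C_inv {a : K} (ha : a ≠ 0) :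
    (X - C a) * (X - C a⁻¹) = X ^ 2 - C (a + a⁻¹) * X + 1 := by
  have h : C a * C a⁻¹ = (1 : K[X]) := by rw [← C_mul, mul_inv_cancel₀ ha, C_1]
  rw [C_add]
  linear_combination h

theorem sq_add_inv_sq {a : K} (ha : a ≠ 0) : a ^ 2 + (a ^ 2)⁻¹ = (a + a⁻¹) ^ 2 - 2 := by
  rw [← inv_pow]
  linear_combination -2 * mul_inv_cancel₀ ha

theorem cube_add_inv_cube {a : K} (ha : a ≠ 0) :
    a ^ 3 + (a ^ 3)⁻¹ = (a + a⁻¹) ^ 3 - 3 * (a + a⁻¹) := by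
  rw [← inv_pow]
  linear_combination (-3 * a - 3 * a⁻¹) * mul_inv_cancel₀ ha

end Field

end G2CharPoly

open G2CharPoly in
/-- The characteristic polynomial of the image of an element of `PGL₂` with eigenvalue ratio
`L` under the 7-dimensional representation `PGL₂ → G₂` has the `G₂`-palindromic shape, and its
coefficients `g1, g2, g3` satisfy the three relations of Section 5.5. -/
theorem stmt7 {K : Type*} [Field K] (L : K) (hL : L ≠ 0) :
    ∃ g1 g2 g3 : K,
      (X - 1) * (X - C L) * (X - C (L^2)) * (X - C (L^3)) *
          (X - C L⁻¹) * (X - C ((L^2)⁻¹)) * (X - C ((L^3)⁻¹)) =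
        X^7 + C g1 * X^6 + C g2 * X^5 + C g3 * X^4
          - C g3 * X^3 - C g2 * X^2 - C g1 * X - 1 ∧
      g1^2 - g1 - g2 + g3 = 0 ∧
      g1^2*g2 - g1*g2^2 - g2^3 + 2*g1^2*g3 - g1*g3^2 = 0 ∧
      g2^4 - g1*g2^2*g3 - g2^3*g3 + g1*g2*g3^2 - g1*g3^3
        - g2^3 + g2^2*g3 + 2*g2*g3^2 - g3^3 = 0 := by
  refine ⟨g₁ (L + L⁻¹), g₂ (L + L⁻¹), g₃ (L + L⁻¹), ?_,
    g_relation₁ _, g_relation₂ _, g_relation₃ _⟩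
  calc (X - 1) * (X - C L) * (X - C (L^2)) * (X - C (L^3)) *
          (X - C L⁻¹) * (X - C ((L^2)⁻¹)) * (X - C ((L^3)⁻¹))
      = (X - 1) * ((X - C L) * (X - C L⁻¹)) * ((X - C (L^2)) * (X - C ((L^2)⁻¹))) *
          ((X - C (L^3)) * (X - C ((L^3)⁻¹))) := by ring
    _ = _ := by
      rw [X_sub_C_mul_X_sub_C_inv hL, X_sub_C_mul_X_sub_C_inv (pow_ne_zero 2 hL),
        X_sub_C_mul_X_sub_C_inv (pow_ne_zero 3 hL), sq_add_inv_sq hL, cube_add_inv_cube hL]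
      exact X_sub_one_mul_quadratics _ _ _
end

section
/- If g1, g2, g3 satisfy g1^2 - g1 - g2 + g3 = 0 and g1^2*g2 - g1*g2^2 - g2^3 + 2*g1^2*g3 - g1*g3^2 = 0, then g1^5 - 2*g1^3*g2 - g1^3 - g1^2*g2 + 2*g1*g2^2 + g2^3 = 0. (Eliminating g3 from the first two PGL2 characteristic polynomial relations yields this quintic relation between g1 and g2.) -/
/-- Eliminating `g3` from the first two PGL₂ characteristic polynomial relations yields the
quintic relation between `g1` and `g2`. -/
theorem stmt8 {R : Type*} [CommRing R] (g1 g2 g3 : R)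
    (h1 : g1^2 - g1 - g2 + g3 = 0)
    (h2 : g1^2*g2 - g1*g2^2 - g2^3 + 2*g1^2*g3 - g1*g3^2 = 0) :
    g1^5 - 2*g1^3*g2 - g1^3 - g1^2*g2 + 2*g1*g2^2 + g2^3 = 0 := by
  obtain rfl : g3 = g1 + g2 - g1^2 := by linear_combination h1
  linear_combination -h2
end

section
/- If a*b*c - a - b - c = 0, and t = -3*(a^2+b^2+c^2) and u = -3*(a*b+a*c+b*c), then 9*c^6 + 3*t*c^4 + (u^2+6*t+12*u)*c^2 + 3*t + 6*u = 0. -/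
/-- On the slice `W = {(a,b,c) : abc = a+b+c}`, with `t = -3(a²+b²+c²)` and
`u = -3(ab+ac+bc)`, the coordinate `c` satisfies the sextic relation of the paper's Lemma. -/
theorem stmt9 {R : Type*} [CommRing R] (a b c t u : R)
    (habc : a*b*c - a - b - c = 0)
    (ht : t = -3*(a^2 + b^2 + c^2)) (hu : u = -3*(a*b + a*c + b*c)) :
    9*c^6 + 3*t*c^4 + (u^2 + 6*t + 12*u)*c^2 + 3*t + 6*u = 0 := by
  subst ht hu
  linear_combination 9 * (a*b*c + (a + b + c) * (1 + 2*c^2)) * habc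
end

section
/- Let t, u in K with u ≠ -3. Then the set {(a,b,c) in K^3 : a*b*c = a + b + c, -3*(a^2+b^2+c^2) = t, -3*(a*b+a*c+b*c) = u} is finite and has at most 12 elements. -/
/-!
A point `(a, b, c)` of the fiber has elementary symmetric functions `e₁ = a + b + c`,
`e₂ = -u/3` and `e₃ = abc = e₁`, where `e₁² = -(t + 2u)/3`. So `e₁` is one of at most two
square roots, `a` is a root of the cubic `X³ - e₁X² + e₂X - e₁` whose roots are `a, b, c`, and
`b` is a root of the quadratic `(X - b)(X - c) = X² - (e₁ - a)X + (e₂ - a(e₁ - a))`; then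
`c = e₁ - a - b`. This leaves at most `2 · 3 · 2 = 12` candidates.
-/

open Polynomial

namespace Polynomial

variable {R : Type*} [CommRing R] [IsDomain R] [DecidableEq R]

theorem card_roots_toFinset_le_of_natDegree_le {p : R[X]} {n : ℕ} (hp : p.natDegree ≤ n) :
    p.roots.toFinset.card ≤ n :=
  p.roots.toFinset_card_le.trans ((card_roots' p).trans hp)

theorem mem_roots_toFinset_of_natDegree_eq {p : R[X]} {n : ℕ} (hp : p.natDegree = n)
    (hn : 0 < n) {x : R} (hx : p.eval x = 0) : x ∈ p.roots.toFinset := by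
  rw [Multiset.mem_toFinset, mem_roots (ne_zero_of_natDegree_gt (hp ▸ hn))]
  exact hx

end Polynomial

section SymmetricFiber

variable {K : Type*} [Field K]

noncomputable def fiberCubic (s e : K) : K[X] := X ^ 3 - C s * X ^ 2 + C e * X - C s

noncomputable def fiberQuadratic (s e a : K) : K[X] := X ^ 2 - C (s - a) * X + C (e - a * (s - a))

theorem natDegree_fiberCubic (s e : K) : (fiberCubic s e).natDegree = 3 := by
  unfold fiberCubic; compute_degree!

theorem natDegree_fiberQuadratic (s e a : K) : (fiberQuadratic s e a).natDegree = 2 := by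
  unfold fiberQuadratic; compute_degree!

variable [DecidableEq K]

noncomputable def fiberCandidates (v e : K) : Finset (K × K × K) :=
  (X ^ 2 - C v).roots.toFinset.biUnion fun s =>
    (fiberCubic s e).roots.toFinset.biUnion fun a =>
      (fiberQuadratic s e a).roots.toFinset.image fun b => (a, b, s - a - b)

theorem card_fiberCandidates_le (v e : K) : (fiberCandidates v e).card ≤ 12 := by
  have hs : (X ^ 2 - C v).roots.toFinset.card ≤ 2 :=
    card_roots_toFinset_le_of_natDegree_le (natDegree_X_pow_sub_C).le
  have ha (s : K) : (fiberCubic s e).roots.toFinset.card ≤ 3 :=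
    card_roots_toFinset_le_of_natDegree_le (natDegree_fiberCubic s e).le
  have hb (s a : K) : (fiberQuadratic s e a).roots.toFinset.card ≤ 2 :=
    card_roots_toFinset_le_of_natDegree_le (natDegree_fiberQuadratic s e a).le
  calc (fiberCandidates v e).card
      ≤ (X ^ 2 - C v).roots.toFinset.card * (3 * 2) := by
        refine Finset.card_biUnion_le_card_mul _ _ _ fun s _ => ?_
        refine (Finset.card_biUnion_le_card_mul _ _ _ fun a _ => ?_).trans
          (Nat.mul_le_mul_right 2 (ha s))
        exact Finset.card_image_le.trans (hb s a)
    _ ≤ 12 := by omega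

theorem mem_fiberCandidates {a b c v e : K} (habc : a * b * c = a + b + c)
    (hv : (a + b + c) ^ 2 = v) (he : a * b + a * c + b * c = e) :
    (a, b, c) ∈ fiberCandidates v e := by
  have hs : a + b + c ∈ (X ^ 2 - C v).roots.toFinset :=
    mem_roots_toFinset_of_natDegree_eq natDegree_X_pow_sub_C two_pos
      (by simp only [eval_sub, eval_pow, eval_X, eval_C]; linear_combination hv)
  have ha : a ∈ (fiberCubic (a + b + c) e).roots.toFinset :=
    mem_roots_toFinset_of_natDegree_eq (natDegree_fiberCubic _ _) three_pos
      (by simp only [fiberCubic, eval_sub, eval_add, eval_mul, eval_pow, eval_X, eval_C]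
          linear_combination habc - a * he)
  have hb : b ∈ (fiberQuadratic (a + b + c) e a).roots.toFinset :=
    mem_roots_toFinset_of_natDegree_eq (natDegree_fiberQuadratic _ _ _) two_pos
      (by simp only [fiberQuadratic, eval_sub, eval_add, eval_mul, eval_pow, eval_X, eval_C]
          linear_combination -he)
  exact Finset.mem_biUnion.2 ⟨_, hs, Finset.mem_biUnion.2 ⟨a, ha,
    Finset.mem_image.2 ⟨b, hb, by rw [show a + b + c - a - b = c by ring]⟩⟩⟩

end SymmetricFiber

theorem stmt12_general {K : Type*} [Field K] (hchar3 : (3 : K) ≠ 0)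
    (t u : K) :
    {p : K × K × K | p.1 * p.2.1 * p.2.2 = p.1 + p.2.1 + p.2.2 ∧
        -3*(p.1^2 + p.2.1^2 + p.2.2^2) = t ∧
        -3*(p.1*p.2.1 + p.1*p.2.2 + p.2.1*p.2.2) = u}.Finite ∧
    {p : K × K × K | p.1 * p.2.1 * p.2.2 = p.1 + p.2.1 + p.2.2 ∧
        -3*(p.1^2 + p.2.1^2 + p.2.2^2) = t ∧
        -3*(p.1*p.2.1 + p.1*p.2.2 + p.2.1*p.2.2) = u}.ncard ≤ 12 := by
  classical
  set F := fiberCandidates (-(t + 2 * u) / 3) (-u / 3)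
  have hsub : {p : K × K × K | p.1 * p.2.1 * p.2.2 = p.1 + p.2.1 + p.2.2 ∧
      -3*(p.1^2 + p.2.1^2 + p.2.2^2) = t ∧
      -3*(p.1*p.2.1 + p.1*p.2.2 + p.2.1*p.2.2) = u} ⊆ F := by
    rintro ⟨a, b, c⟩ ⟨habc, ht, hu⟩
    refine mem_fiberCandidates habc ?_ ?_
    · field_simp; linear_combination -ht - 2 * hu
    · field_simp; linear_combination -hu
  exact ⟨F.finite_toSet.subset hsub,
    (Set.ncard_le_ncard hsub F.finite_toSet).trans
      ((Set.ncard_coe_finset F).trans_le (card_fiberCandidates_le _ _))⟩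

/-- The fiber over `(t,u)` with `u ≠ -3` of the map
`(a,b,c) ↦ (-3(a²+b²+c²), -3(ab+ac+bc))` on the slice `W = {abc = a+b+c}` is finite with at
most 12 elements. -/
theorem stmt12 {K : Type*} [Field K] (hchar2 : (2 : K) ≠ 0) (hchar3 : (3 : K) ≠ 0)
    (t u : K) (hu : u ≠ -3) :
    {p : K × K × K | p.1 * p.2.1 * p.2.2 = p.1 + p.2.1 + p.2.2 ∧
        -3*(p.1^2 + p.2.1^2 + p.2.2^2) = t ∧
        -3*(p.1*p.2.1 + p.1*p.2.2 + p.2.1*p.2.2) = u}.Finite ∧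
    {p : K × K × K | p.1 * p.2.1 * p.2.2 = p.1 + p.2.1 + p.2.2 ∧
        -3*(p.1^2 + p.2.1^2 + p.2.2^2) = t ∧
        -3*(p.1*p.2.1 + p.1*p.2.2 + p.2.1*p.2.2) = u}.ncard ≤ 12 :=
  stmt12_general hchar3 t u
end

section
/- Let t, u in K satisfy t + 2*u ≠ 0, u + 3 ≠ 0, and -t*u^2 + 2*u^3 - 12*t^2 + 6*t*u + 60*u^2 + 243*t + 486*u ≠ 0. Then there exists (a,b,c) in K^3 with a*b*c = a + b + c, -3*(a^2+b^2+c^2) = t, and -3*(a*b+a*c+b*c) = u. -/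
/-- Over an algebraically closed field of characteristic ≠ 2, 3, every pair `(t,u)` avoiding
the degeneracy locus `(t+2u)(u+3)(cubic) = 0` is in the image of the map
`(a,b,c) ↦ (-3(a²+b²+c²), -3(ab+ac+bc))` on the slice `W = {abc = a+b+c}`. -/
theorem stmt13 {K : Type*} [Field K] [IsAlgClosed K]
    (hchar2 : (2 : K) ≠ 0) (hchar3 : (3 : K) ≠ 0)
    (t u : K) (h1 : t + 2*u ≠ 0) (h2 : u + 3 ≠ 0)
    (h3 : -t*u^2 + 2*u^3 - 12*t^2 + 6*t*u + 60*u^2 + 243*t + 486*u ≠ 0) :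
    ∃ a b c : K, a*b*c = a + b + c ∧
      -3*(a^2 + b^2 + c^2) = t ∧ -3*(a*b + a*c + b*c) = u := by
  obtain ⟨s, hs⟩ := IsAlgClosed.exists_pow_nat_eq (-3*(t + 2*u)) (n := 2) (by norm_num)
  -- root of the cubic Z^3 - s Z^2 - 3u Z - 9s
  set p : Polynomial K := Polynomial.X^3 + Polynomial.C (-s) * Polynomial.X^2
      + Polynomial.C (-3*u) * Polynomial.X + Polynomial.C (-9*s) with hp
  have hdeg : p.degree ≠ 0 := by
    have : p.degree = 3 := by rw [hp]; compute_degree!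
    rw [this]; norm_num
  obtain ⟨z, hzr⟩ := IsAlgClosed.exists_root p hdeg
  have hz : z^3 - s*z^2 - 3*u*z - 9*s = 0 := by
    simp only [hp, Polynomial.IsRoot, Polynomial.eval_add, Polynomial.eval_mul,
      Polynomial.eval_pow, Polynomial.eval_X, Polynomial.eval_C] at hzr
    linear_combination hzr
  -- root of the quadratic X^2 - (s-z) X + (-3u - z(s-z))
  set q : Polynomial K := Polynomial.X^2 + Polynomial.C (-(s-z)) * Polynomial.X
      + Polynomial.C (-3*u - z*(s-z)) with hq
  have hqdeg : q.degree ≠ 0 := by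
    have : q.degree = 2 := by rw [hq]; compute_degree!
    rw [this]; norm_num
  obtain ⟨x, hxr⟩ := IsAlgClosed.exists_root q hqdeg
  have hx : x^2 - (s-z)*x + (-3*u - z*(s-z)) = 0 := by
    simp only [hq, Polynomial.IsRoot, Polynomial.eval_add, Polynomial.eval_mul,
      Polynomial.eval_pow, Polynomial.eval_X, Polynomial.eval_C] at hxr
    linear_combination hxr
  set y : K := s - z - x with hy
  have H1 : x*y*z = 9*(x + y + z) := by rw [hy]; linear_combination (-z)*hx + hz
  have H2 : x^2 + y^2 + z^2 = -3*t := by rw [hy]; linear_combination 2*hx + hs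
  have H3 : x*y + x*z + y*z = -3*u := by rw [hy]; linear_combination -hx
  refine ⟨x/3, y/3, z/3, ?_, ?_, ?_⟩
  · field_simp
    linear_combination H1
  · field_simp
    linear_combination (-1 : K)*H2
  · field_simp
    linear_combination (-1 : K)*H3
end

section
/- Write the characteristic polynomial of Q0 as det(X*Id - Q0) = X^3 + t*X^2 + r*X + 9*s (so t = -trace(Q0) and s = -det(Q0)/9). Then det(Q) = 9 - 3*t + r - 3*s. -/
open Matrix Polynomial

/-! With `D = diag(1,3,1)` and `G = Mᵀ · diag(1,3,1,3) · M`, the Gram matrix is `Q = diag(3,1,3) + G`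
and `Q0 = D G`. Since `D · diag(3,1,3) = 3`, we get `D Q = 3 + Q0`, so
`3 det Q = det (3 + Q0) = -χ_{Q0}(-3) = 3 (9 - 3t + r - 3s)`; cancel the `3`. -/

namespace Matrix

variable {n R : Type*} [Fintype n] [DecidableEq n] [CommRing R]

theorem det_add_scalar_eq_eval_charpoly (A : Matrix n n R) (c : R) :
    (scalar n c + A).det = (-1) ^ Fintype.card n * A.charpoly.eval (-c) := by
  rw [eval_charpoly, ← det_neg, map_neg]
  congr 1
  abel

theorem det_mul_det_add_eq_eval_charpoly {D E : Matrix n n R} {c : R}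
    (hDE : D * E = scalar n c) (G : Matrix n n R) :
    D.det * (E + G).det = (-1) ^ Fintype.card n * (D * G).charpoly.eval (-c) := by
  rw [← det_mul, Matrix.mul_add, hDE, det_add_scalar_eq_eval_charpoly]

end Matrix

theorem stmt14_general {K : Type*} [Field K] (hchar3 : (3 : K) ≠ 0)
    (a1 a2 a3 a4 b1 b2 b3 b4 c1 c2 c3 c4 t r s : K)
    (hchar : ((Matrix.diagonal ![1, 3, 1] : Matrix (Fin 3) (Fin 3) K) *
        (!![a1, b1, c1; a2, b2, c2; a3, b3, c3; a4, b4, c4] : Matrix (Fin 4) (Fin 3) K)ᵀ *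
        (Matrix.diagonal ![1, 3, 1, 3] : Matrix (Fin 4) (Fin 4) K) *
        !![a1, b1, c1; a2, b2, c2; a3, b3, c3; a4, b4, c4]).charpoly =
      X^3 + C t * X^2 + C r * X + C (9*s)) :
    (!![3 + a1^2 + 3*a2^2 + a3^2 + 3*a4^2, a1*b1 + 3*a2*b2 + a3*b3 + 3*a4*b4,
          a1*c1 + 3*a2*c2 + a3*c3 + 3*a4*c4;
        a1*b1 + 3*a2*b2 + a3*b3 + 3*a4*b4, 1 + b1^2 + 3*b2^2 + b3^2 + 3*b4^2,
          b1*c1 + 3*b2*c2 + b3*c3 + 3*b4*c4;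
        a1*c1 + 3*a2*c2 + a3*c3 + 3*a4*c4, b1*c1 + 3*b2*c2 + b3*c3 + 3*b4*c4,
          3 + c1^2 + 3*c2^2 + c3^2 + 3*c4^2] : Matrix (Fin 3) (Fin 3) K).det
      = 9 - 3*t + r - 3*s := by
  set M : Matrix (Fin 4) (Fin 3) K := !![a1, b1, c1; a2, b2, c2; a3, b3, c3; a4, b4, c4]
  set D3 : Matrix (Fin 3) (Fin 3) K := diagonal ![1, 3, 1]
  set D4 : Matrix (Fin 4) (Fin 4) K := diagonal ![1, 3, 1, 3]
  set G := Mᵀ * D4 * M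
  convert_to (diagonal ![3, 1, 3] + G).det = 9 - 3*t + r - 3*s using 2
  · ext i j
    fin_cases i <;> fin_cases j <;>
      simp [G, M, D4, mul_apply, Fin.sum_univ_succ, diagonal_apply] <;> ring
  have hD : D3 * diagonal ![3, 1, 3] = scalar (Fin 3) 3 := by
    rw [diagonal_mul_diagonal, scalar_apply]
    congr 1
    ext i
    fin_cases i <;> norm_num
  have hdet := det_mul_det_add_eq_eval_charpoly hD G
  rw [show D3 * G = D3 * Mᵀ * D4 * M by simp only [G, Matrix.mul_assoc], hchar] at hdet
  simp [D3, det_diagonal, Fin.prod_univ_succ] at hdet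
  apply mul_left_cancel₀ hchar3
  linear_combination hdet

/-- If the characteristic polynomial of `Q0 = I3 * Mᵀ * I4 * M` is
`X³ + t·X² + r·X + 9s`, then the Gram matrix `Q` satisfies `det Q = 9 - 3t + r - 3s`. -/
theorem stmt14 {K : Type*} [Field K] (hchar2 : (2 : K) ≠ 0) (hchar3 : (3 : K) ≠ 0)
    (a1 a2 a3 a4 b1 b2 b3 b4 c1 c2 c3 c4 t r s : K)
    (hchar : ((Matrix.diagonal ![1, 3, 1] : Matrix (Fin 3) (Fin 3) K) *
        (!![a1, b1, c1; a2, b2, c2; a3, b3, c3; a4, b4, c4] : Matrix (Fin 4) (Fin 3) K)ᵀ *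
        (Matrix.diagonal ![1, 3, 1, 3] : Matrix (Fin 4) (Fin 4) K) *
        !![a1, b1, c1; a2, b2, c2; a3, b3, c3; a4, b4, c4]).charpoly =
      X^3 + C t * X^2 + C r * X + C (9*s)) :
    (!![3 + a1^2 + 3*a2^2 + a3^2 + 3*a4^2, a1*b1 + 3*a2*b2 + a3*b3 + 3*a4*b4,
          a1*c1 + 3*a2*c2 + a3*c3 + 3*a4*c4;
        a1*b1 + 3*a2*b2 + a3*b3 + 3*a4*b4, 1 + b1^2 + 3*b2^2 + b3^2 + 3*b4^2,
          b1*c1 + 3*b2*c2 + b3*c3 + 3*b4*c4;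
        a1*c1 + 3*a2*c2 + a3*c3 + 3*a4*c4, b1*c1 + 3*b2*c2 + b3*c3 + 3*b4*c4,
          3 + c1^2 + 3*c2^2 + c3^2 + 3*c4^2] : Matrix (Fin 3) (Fin 3) K).det
      = 9 - 3*t + r - 3*s :=
  stmt14_general hchar3 a1 a2 a3 a4 b1 b2 b3 b4 c1 c2 c3 c4 t r s hchar
end

section
/- Let a, b, c, d, e, f in K satisfy a^2+3*b^2+c^2+3*d^2 = 1 and e^2+3*f^2 = 1. Define the 4x4 matrices H1 with rows (a,3*b,c,3*d), (-b,a,-d,c), (-c,3*d,a,-3*b), (-d,-c,b,a) and U with rows (e,-3*f,0,0), (f,e,0,0), (0,0,e,-3*f), (0,0,f,e); set h = H1*U. Define the 3x3 matrix Phi with rows (a^2+3*b^2-c^2-3*d^2, -2*a*d+2*b*c, 2*a*c+6*b*d), (6*a*d+6*b*c, a^2-3*b^2+c^2-3*d^2, -6*a*b+6*c*d), (-2*a*c+6*b*d, 2*a*b+2*c*d, a^2-3*b^2-c^2+3*d^2). Then: (i) h^T * I4 * h = I4; (ii) Phi^T * diag(3,1,3) * Phi = diag(3,1,3); and for every 4x3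 matrix M over K, writing Q0(N) = I3 * N^T * I4 * N: (iii) Q0(h*M) = Q0(M) and (iv) Phi * Q0(M*Phi) = Q0(M) * Phi. -/
/-!
The quaternion norm `N(h) = a² + 3b² + c² + 3d²` of `h = a + bi + cj + dij` (`i² = -3`, `j² = -1`)
is multiplicative, so `v ↦ v h̄` scales the form `diag(1,3,1,3)` by `N(h)`, left multiplication
by `u = e + fi` scales it by `N(u)`, and conjugation `v ↦ h v h̄` scales the norm form of the pure
quaternions, and the dual form, by `N(h)²`. For norm-one `h, u` these are isometries, and the two
equivariance identities of `Q0` are formal consequences of being an isometry.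
-/

open Matrix

section

variable {R : Type*} [CommRing R] {n m : Type*} [Fintype n] [Fintype m]

def PreservesForm (D A : Matrix n n R) : Prop := Aᵀ * D * A = D

theorem PreservesForm.mul {D A B : Matrix n n R} (hA : PreservesForm D A)
    (hB : PreservesForm D B) : PreservesForm D (A * B) := by
  unfold PreservesForm at *
  calc (A * B)ᵀ * D * (A * B) = Bᵀ * (Aᵀ * D * A) * B := by
        simp only [transpose_mul, Matrix.mul_assoc]
    _ = D := by rw [hA, hB]

theorem PreservesForm.gram_mul_left {D A : Matrix n n R} (hA : PreservesForm D A)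
    (I : Matrix m m R) (M : Matrix n m R) :
    I * (A * M)ᵀ * D * (A * M) = I * Mᵀ * D * M := by
  calc I * (A * M)ᵀ * D * (A * M) = I * Mᵀ * (Aᵀ * D * A) * M := by
        simp only [transpose_mul, Matrix.mul_assoc]
    _ = I * Mᵀ * D * M := by rw [hA]

theorem PreservesForm.mul_gram_mul_right {I P : Matrix m m R} (hP : PreservesForm I Pᵀ)
    (D : Matrix n n R) (M : Matrix n m R) :
    P * (I * (M * P)ᵀ * D * (M * P)) = I * Mᵀ * D * M * P := by
  calc P * (I * (M * P)ᵀ * D * (M * P)) = P * I * Pᵀ * (Mᵀ * D * M * P) := by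
        simp only [transpose_mul, Matrix.mul_assoc]
    _ = I * Mᵀ * D * M * P := by
        rw [show P * I * Pᵀ = I from hP]
        simp only [Matrix.mul_assoc]

end

section

variable {R : Type*} [CommRing R]

def quatNorm (a b c d : R) : R := a^2 + 3*b^2 + c^2 + 3*d^2

/- Matrices, over the quaternion algebra `(-3, -1)`, of `v ↦ v h̄` and of `v ↦ u v` in the basis
`(1, i, j, ij)`, and of `v ↦ h v h̄` in the basis `(i, j, ij)` of the pure quaternions. -/
def quatRightConjMatrix (a b c d : R) : Matrix (Fin 4) (Fin 4) R :=
  !![a, 3*b, c, 3*d; -b, a, -d, c; -c, 3*d, a, -3*b; -d, -c, b, a]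

def circleLeftMulMatrix (e f : R) : Matrix (Fin 4) (Fin 4) R :=
  !![e, -3*f, 0, 0; f, e, 0, 0; 0, 0, e, -3*f; 0, 0, f, e]

def quatConjMatrix (a b c d : R) : Matrix (Fin 3) (Fin 3) R :=
  !![a^2 + 3*b^2 - c^2 - 3*d^2, -2*a*d + 2*b*c, 2*a*c + 6*b*d;
     6*a*d + 6*b*c, a^2 - 3*b^2 + c^2 - 3*d^2, -6*a*b + 6*c*d;
     -2*a*c + 6*b*d, 2*a*b + 2*c*d, a^2 - 3*b^2 - c^2 + 3*d^2]

theorem quatRightConjMatrix_transpose_mul_mul (a b c d : R) :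
    (quatRightConjMatrix a b c d)ᵀ * diagonal ![1, 3, 1, 3] * quatRightConjMatrix a b c d
      = quatNorm a b c d • diagonal ![1, 3, 1, 3] := by
  ext i j
  fin_cases i <;> fin_cases j <;>
    simp [quatRightConjMatrix, quatNorm, mul_apply, Fin.sum_univ_four] <;> ring

theorem circleLeftMulMatrix_transpose_mul_mul (e f : R) :
    (circleLeftMulMatrix e f)ᵀ * diagonal ![1, 3, 1, 3] * circleLeftMulMatrix e f
      = (e^2 + 3*f^2) • diagonal ![1, 3, 1, 3] := by
  ext i j
  fin_cases i <;> fin_cases j <;>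
    simp [circleLeftMulMatrix, mul_apply, Fin.sum_univ_four] <;> ring

theorem quatConjMatrix_transpose_mul_mul (a b c d : R) :
    (quatConjMatrix a b c d)ᵀ * diagonal ![3, 1, 3] * quatConjMatrix a b c d
      = quatNorm a b c d ^ 2 • diagonal ![3, 1, 3] := by
  ext i j
  fin_cases i <;> fin_cases j <;>
    simp [quatConjMatrix, quatNorm, mul_apply, Fin.sum_univ_three] <;> ring

theorem quatConjMatrix_mul_mul_transpose (a b c d : R) :
    quatConjMatrix a b c d * diagonal ![1, 3, 1] * (quatConjMatrix a b c d)ᵀ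
      = quatNorm a b c d ^ 2 • diagonal ![1, 3, 1] := by
  ext i j
  fin_cases i <;> fin_cases j <;>
    simp [quatConjMatrix, quatNorm, mul_apply, vecMul_diagonal, Fin.sum_univ_three] <;> ring

end

theorem stmt15_general {K : Type*} [Field K]
    (a b c d e f : K)
    (hquat : a^2 + 3*b^2 + c^2 + 3*d^2 = 1) (hcirc : e^2 + 3*f^2 = 1)
    (H1 U hmat : Matrix (Fin 4) (Fin 4) K) (Phi : Matrix (Fin 3) (Fin 3) K)
    (hH1 : H1 = !![a, 3*b, c, 3*d; -b, a, -d, c; -c, 3*d, a, -3*b; -d, -c, b, a])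
    (hU : U = !![e, -3*f, 0, 0; f, e, 0, 0; 0, 0, e, -3*f; 0, 0, f, e])
    (hhmat : hmat = H1 * U)
    (hPhi : Phi = !![a^2 + 3*b^2 - c^2 - 3*d^2, -2*a*d + 2*b*c, 2*a*c + 6*b*d;
                     6*a*d + 6*b*c, a^2 - 3*b^2 + c^2 - 3*d^2, -6*a*b + 6*c*d;
                     -2*a*c + 6*b*d, 2*a*b + 2*c*d, a^2 - 3*b^2 - c^2 + 3*d^2]) :
    hmatᵀ * (Matrix.diagonal ![1, 3, 1, 3] : Matrix (Fin 4) (Fin 4) K) * hmat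
        = Matrix.diagonal ![1, 3, 1, 3] ∧
    Phiᵀ * (Matrix.diagonal ![3, 1, 3] : Matrix (Fin 3) (Fin 3) K) * Phi
        = Matrix.diagonal ![3, 1, 3] ∧
    (∀ M : Matrix (Fin 4) (Fin 3) K,
      (Matrix.diagonal ![1, 3, 1] : Matrix (Fin 3) (Fin 3) K) * (hmat * M)ᵀ *
          (Matrix.diagonal ![1, 3, 1, 3] : Matrix (Fin 4) (Fin 4) K) * (hmat * M)
        = (Matrix.diagonal ![1, 3, 1] : Matrix (Fin 3) (Fin 3) K) * Mᵀ *
          (Matrix.diagonal ![1, 3, 1, 3] : Matrix (Fin 4) (Fin 4) K) * M) ∧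
    (∀ M : Matrix (Fin 4) (Fin 3) K,
      Phi * ((Matrix.diagonal ![1, 3, 1] : Matrix (Fin 3) (Fin 3) K) * (M * Phi)ᵀ *
          (Matrix.diagonal ![1, 3, 1, 3] : Matrix (Fin 4) (Fin 4) K) * (M * Phi))
        = ((Matrix.diagonal ![1, 3, 1] : Matrix (Fin 3) (Fin 3) K) * Mᵀ *
          (Matrix.diagonal ![1, 3, 1, 3] : Matrix (Fin 4) (Fin 4) K) * M) * Phi) := by
  subst hH1 hU hhmat hPhi
  have hnorm : quatNorm a b c d = 1 := hquat
  have hH1 : PreservesForm (diagonal ![1, 3, 1, 3]) (quatRightConjMatrix a b c d) := by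
    rw [PreservesForm, quatRightConjMatrix_transpose_mul_mul, hnorm, one_smul]
  have hU : PreservesForm (diagonal ![1, 3, 1, 3]) (circleLeftMulMatrix e f) := by
    rw [PreservesForm, circleLeftMulMatrix_transpose_mul_mul, hcirc, one_smul]
  have hPhi : PreservesForm (diagonal ![3, 1, 3]) (quatConjMatrix a b c d) := by
    rw [PreservesForm, quatConjMatrix_transpose_mul_mul, hnorm, one_pow, one_smul]
  have hPhiT : PreservesForm (diagonal ![1, 3, 1]) (quatConjMatrix a b c d)ᵀ := by
    rw [PreservesForm, transpose_transpose, quatConjMatrix_mul_mul_transpose, hnorm, one_pow,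
      one_smul]
  have hmat := hH1.mul hU
  exact ⟨hmat, hPhi, hmat.gram_mul_left _, hPhiT.mul_gram_mul_right _⟩

/-- Equivariance properties of the map `M ↦ Q0(M) = I3 * Mᵀ * I4 * M` under the short-root
`GL₂`-subgroup action: `h = H1·U` preserves the form `I4`, `Phi` preserves `diag(3,1,3)`,
`Q0(h·M) = Q0(M)`, and `Phi · Q0(M·Phi) = Q0(M) · Phi`. -/
theorem stmt15 {K : Type*} [Field K] (hchar2 : (2 : K) ≠ 0) (hchar3 : (3 : K) ≠ 0)
    (a b c d e f : K)
    (hquat : a^2 + 3*b^2 + c^2 + 3*d^2 = 1) (hcirc : e^2 + 3*f^2 = 1)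
    (H1 U hmat : Matrix (Fin 4) (Fin 4) K) (Phi : Matrix (Fin 3) (Fin 3) K)
    (hH1 : H1 = !![a, 3*b, c, 3*d; -b, a, -d, c; -c, 3*d, a, -3*b; -d, -c, b, a])
    (hU : U = !![e, -3*f, 0, 0; f, e, 0, 0; 0, 0, e, -3*f; 0, 0, f, e])
    (hhmat : hmat = H1 * U)
    (hPhi : Phi = !![a^2 + 3*b^2 - c^2 - 3*d^2, -2*a*d + 2*b*c, 2*a*c + 6*b*d;
                     6*a*d + 6*b*c, a^2 - 3*b^2 + c^2 - 3*d^2, -6*a*b + 6*c*d;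
                     -2*a*c + 6*b*d, 2*a*b + 2*c*d, a^2 - 3*b^2 - c^2 + 3*d^2]) :
    hmatᵀ * (Matrix.diagonal ![1, 3, 1, 3] : Matrix (Fin 4) (Fin 4) K) * hmat
        = Matrix.diagonal ![1, 3, 1, 3] ∧
    Phiᵀ * (Matrix.diagonal ![3, 1, 3] : Matrix (Fin 3) (Fin 3) K) * Phi
        = Matrix.diagonal ![3, 1, 3] ∧
    (∀ M : Matrix (Fin 4) (Fin 3) K,
      (Matrix.diagonal ![1, 3, 1] : Matrix (Fin 3) (Fin 3) K) * (hmat * M)ᵀ *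
          (Matrix.diagonal ![1, 3, 1, 3] : Matrix (Fin 4) (Fin 4) K) * (hmat * M)
        = (Matrix.diagonal ![1, 3, 1] : Matrix (Fin 3) (Fin 3) K) * Mᵀ *
          (Matrix.diagonal ![1, 3, 1, 3] : Matrix (Fin 4) (Fin 4) K) * M) ∧
    (∀ M : Matrix (Fin 4) (Fin 3) K,
      Phi * ((Matrix.diagonal ![1, 3, 1] : Matrix (Fin 3) (Fin 3) K) * (M * Phi)ᵀ *
          (Matrix.diagonal ![1, 3, 1, 3] : Matrix (Fin 4) (Fin 4) K) * (M * Phi))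
        = ((Matrix.diagonal ![1, 3, 1] : Matrix (Fin 3) (Fin 3) K) * Mᵀ *
          (Matrix.diagonal ![1, 3, 1, 3] : Matrix (Fin 4) (Fin 4) K) * M) * Phi) :=
  stmt15_general a b c d e f hquat hcirc H1 U hmat Phi hH1 hU hhmat hPhi
end

section
/- For parameters (w,x,y,a,b,c) in K^6 define F(w,x,y,a,b,c) to be the 4x3 matrix with rows (-3*a*x, -b*y, 0), (a*w, 0, c*y), (0, b*w, -3*c*x), (-a*y, b*x, c*w). Suppose (w,x,y,a,b,c) and (w',x',y',a',b',c') both satisfy w^2+3*x^2+y^2 = 1 and a*b*c - a - b - c = 0, that (a,b,c) ≠ (0,0,0), and that F(w,x,y,a,b,c) = F(w',x',y',a',b',c'). Then either (w',x',y',a',b',c') = (w,x,y,a,b,c) or (w',x',y',a',b',c') = (-w,-x,-y,-a,-b,-c). -/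
/-!
Each column of the matrix is one of `a, b, c` times a linear image of `(w, x, y)`, injective as
`3 ≠ 0`, so equal matrices give `t • (w, x, y) = t' • (w', x', y')` for `(t, t')` each of the
pairs `(a, a')`, `(b, b')`, `(c, c')`. Applying the quadratic form `w² + 3x² + y²`, which is `1`
on both vectors, to such an identity with `t ≠ 0` gives `t'² = t²`, hence a common sign relating
`t'` to `t` and `(w', x', y')` to `(w, x, y)`; as `(w, x, y) ≠ 0`, the other scalars follow it.
-/

open Matrix

section UnitVectors

variable {K V : Type*} [Field K] [AddCommGroup V] [Module K V] {Q : QuadraticForm K V}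

theorem QuadraticForm.eq_or_eq_neg_of_smul_eq_smul {v v' : V} {t t' : K}
    (hv : Q v = 1) (hv' : Q v' = 1) (ht : t ≠ 0) (h : t • v = t' • v') :
    (t' = t ∧ v' = v) ∨ (t' = -t ∧ v' = -v) := by
  have hsq : t' ^ 2 = t ^ 2 := by
    have := congrArg Q h
    simp only [QuadraticMap.map_smul, hv, hv', smul_eq_mul, mul_one] at this
    linear_combination -this
  rcases sq_eq_sq_iff_eq_or_eq_neg.mp hsq with rfl | rfl
  · exact Or.inl ⟨rfl, (smul_right_injective V ht h).symm⟩
  · refine Or.inr ⟨rfl, smul_right_injective V ht ?_⟩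
    change t • v' = t • -v
    rw [smul_neg, h, neg_smul, neg_neg]

theorem QuadraticForm.eq_or_eq_neg_of_forall_smul_eq_smul {ι : Type*} {v v' : V} {t t' : ι → K}
    (hv : Q v = 1) (hv' : Q v' = 1) (ht : t ≠ 0) (h : ∀ i, t i • v = t' i • v') :
    (v' = v ∧ t' = t) ∨ (v' = -v ∧ t' = -t) := by
  obtain ⟨i, hi⟩ := Function.ne_iff.mp ht
  have hv0 : v ≠ 0 := by
    rintro rfl
    simp at hv
  rcases eq_or_eq_neg_of_smul_eq_smul hv hv' hi (h i) with ⟨-, rfl⟩ | ⟨-, rfl⟩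
  · exact Or.inl ⟨rfl, funext fun j => (smul_left_injective K hv0 (h j)).symm⟩
  · refine Or.inr ⟨rfl, funext fun j => ?_⟩
    have hj : t j • v = (-t' j) • v := by rw [h j, smul_neg, neg_smul]
    simp [smul_left_injective K hv0 hj]

end UnitVectors

theorem smul_eq_smul_of_matrix_eq {K : Type*} [Field K] (hchar3 : (3 : K) ≠ 0)
    {w x y a b c w' x' y' a' b' c' : K}
    (hF : (!![-3*a*x, -b*y, 0;
              a*w, 0, c*y;
              0, b*w, -3*c*x;
              -a*y, b*x, c*w] : Matrix (Fin 4) (Fin 3) K) =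
          !![-3*a'*x', -b'*y', 0;
             a'*w', 0, c'*y';
             0, b'*w', -3*c'*x';
             -a'*y', b'*x', c'*w']) :
    ∀ i, ![a, b, c] i • ![w, x, y] = ![a', b', c'] i • ![w', x', y'] := by
  have e := fun i j => congrFun (congrFun hF i) j
  have e00 : 3 * a * x = 3 * a' * x' := by simpa using e 0 0
  have e01 : b * y = b' * y' := by simpa using e 0 1
  have e10 : a * w = a' * w' := by simpa using e 1 0
  have e12 : c * y = c' * y' := by simpa using e 1 2
  have e21 : b * w = b' * w' := by simpa using e 2 1
  have e22 : 3 * c * x = 3 * c' * x' := by simpa using e 2 2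
  have e30 : a * y = a' * y' := by simpa using e 3 0
  have e31 : b * x = b' * x' := by simpa using e 3 1
  have e32 : c * w = c' * w' := by simpa using e 3 2
  have eax : a * x = a' * x' := mul_left_cancel₀ hchar3 (by linear_combination e00)
  have ecx : c * x = c' * x' := mul_left_cancel₀ hchar3 (by linear_combination e22)
  intro i
  ext j
  fin_cases i <;> fin_cases j <;> simp [*]

theorem stmt17_general {K : Type*} [Field K] (hchar3 : (3 : K) ≠ 0)
    (w x y a b c w' x' y' a' b' c' : K)
    (h1 : w^2 + 3*x^2 + y^2 = 1)
    (h1' : w'^2 + 3*x'^2 + y'^2 = 1)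
    (hne : ¬(a = 0 ∧ b = 0 ∧ c = 0))
    (hF : (!![-3*a*x, -b*y, 0;
              a*w, 0, c*y;
              0, b*w, -3*c*x;
              -a*y, b*x, c*w] : Matrix (Fin 4) (Fin 3) K) =
          !![-3*a'*x', -b'*y', 0;
             a'*w', 0, c'*y';
             0, b'*w', -3*c'*x';
             -a'*y', b'*x', c'*w']) :
    (w' = w ∧ x' = x ∧ y' = y ∧ a' = a ∧ b' = b ∧ c' = c) ∨
    (w' = -w ∧ x' = -x ∧ y' = -y ∧ a' = -a ∧ b' = -b ∧ c' = -c) := by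
  let Q := QuadraticMap.weightedSumSquares K ![(1 : K), 3, 1]
  have hQ : ∀ p q r : K, Q ![p, q, r] = p^2 + 3*q^2 + r^2 := fun p q r => by
    simp [Q, QuadraticMap.weightedSumSquares_apply, Fin.sum_univ_three]
    ring
  have habc : ![a, b, c] ≠ 0 := fun h =>
    hne ⟨congrFun h 0, congrFun h 1, congrFun h 2⟩
  rcases QuadraticForm.eq_or_eq_neg_of_forall_smul_eq_smul ((hQ w x y).trans h1)
    ((hQ w' x' y').trans h1') habc (smul_eq_smul_of_matrix_eq hchar3 hF)
    with ⟨hv, ht⟩ | ⟨hv, ht⟩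
  · left
    simp only [vecCons_inj, and_true] at hv ht
    tauto
  · right
    simp only [neg_cons, neg_empty, vecCons_inj, and_true] at hv ht
    tauto

/-- The parameterization `F` of the slice `X₀` by
`{((w,x,y),(a,b,c)) : w²+3x²+y² = 1, abc - a - b - c = 0}` is 2-to-1 away from
`a = b = c = 0`: equal values of `F` force the parameters to agree up to a global sign. -/
theorem stmt17 {K : Type*} [Field K] (hchar2 : (2 : K) ≠ 0) (hchar3 : (3 : K) ≠ 0)
    (w x y a b c w' x' y' a' b' c' : K)
    (h1 : w^2 + 3*x^2 + y^2 = 1) (h2 : a*b*c - a - b - c = 0)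
    (h1' : w'^2 + 3*x'^2 + y'^2 = 1) (h2' : a'*b'*c' - a' - b' - c' = 0)
    (hne : ¬(a = 0 ∧ b = 0 ∧ c = 0))
    (hF : (!![-3*a*x, -b*y, 0;
              a*w, 0, c*y;
              0, b*w, -3*c*x;
              -a*y, b*x, c*w] : Matrix (Fin 4) (Fin 3) K) =
          !![-3*a'*x', -b'*y', 0;
             a'*w', 0, c'*y';
             0, b'*w', -3*c'*x';
             -a'*y', b'*x', c'*w']) :
    (w' = w ∧ x' = x ∧ y' = y ∧ a' = a ∧ b' = b ∧ c' = c) ∨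
    (w' = -w ∧ x' = -x ∧ y' = -y ∧ a' = -a ∧ b' = -b ∧ c' = -c) :=
  stmt17_general hchar3 w x y a b c w' x' y' a' b' c' h1 h1' hne hF
end
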